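/- arXiv:1805.01341 — 4 statements merged into one kernel-verified Lean document; each statement's English description precedes it below -/
import Mathlib

section
/- Let W be a random variable with distribution μ_k = (1/(1+f(k))) ∏_{i=0}^{k-1} f(i)/(1+f(i)). Then for every bounded function g : ℕ₀ → ℝ, E[f(W)(g(W+1) - g(W)) + g(0) - g(W)] = 0. -/
/-!
By the tail identity `μ([k+1, ∞)) = f k μ_k` and `μ_k = μ([k, ∞)) - μ([k+1, ∞))`, the `k`-th
summand is `h k - h (k+1)` with `h n = μ([n, ∞)) (g 0 - g n)`. Since `f k ≤ k + 1` forces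
`μ([n, ∞)) ≤ 1/(n+1)` and `g` is bounded, `h n → 0`, so the series telescopes to `h 0 = 0`
(and when it is not summable, `tsum` is `0` by convention).
-/

open Finset

/-- The limiting degree distribution `μ_k = (1/(1+f k)) ∏_{i<k} f i/(1+f i)`. -/
noncomputable def muk (f : ℕ → ℝ) (k : ℕ) : ℝ :=
  (1 / (1 + f k)) * ∏ i ∈ Finset.range k, f i / (1 + f i)

open Filter Topology

/-- The tail `μ([n, ∞))` of the distribution `muk f`. -/
noncomputable def muTail (f : ℕ → ℝ) (n : ℕ) : ℝ :=
  ∏ i ∈ range n, f i / (1 + f i)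

theorem muTail_succ (f : ℕ → ℝ) (n : ℕ) :
    muTail f (n + 1) = muTail f n * (f n / (1 + f n)) :=
  prod_range_succ _ _

theorem muk_eq_muTail_sub_muTail {f : ℕ → ℝ} {k : ℕ} (hf : 1 + f k ≠ 0) :
    muk f k = muTail f k - muTail f (k + 1) := by
  rw [muk, muTail_succ, ← muTail]
  field_simp
  ring

theorem mul_muk_eq_muTail_succ (f : ℕ → ℝ) (k : ℕ) :
    f k * muk f k = muTail f (k + 1) := by
  rw [muk, muTail_succ, ← muTail]
  ring

theorem muk_mul_stein_eq_sub {f : ℕ → ℝ} {k : ℕ} (hf : 1 + f k ≠ 0) (g : ℕ → ℝ) :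
    muk f k * (f k * (g (k + 1) - g k) + g 0 - g k) =
      muTail f k * (g 0 - g k) - muTail f (k + 1) * (g 0 - g (k + 1)) := by
  linear_combination (g (k + 1) - g k) * mul_muk_eq_muTail_succ f k +
    (g 0 - g k) * muk_eq_muTail_sub_muTail hf

theorem muTail_nonneg {f : ℕ → ℝ} (hf : ∀ k, 0 ≤ f k) (n : ℕ) : 0 ≤ muTail f n :=
  prod_nonneg fun i _ => div_nonneg (hf i) (by linarith [hf i])

/-- Since `x ↦ x / (1 + x)` is increasing, each factor is at most `(i + 1) / (i + 2)`,
and these factors telescope. -/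
theorem muTail_le_one_div {f : ℕ → ℝ} (hf : ∀ k, 0 ≤ f k) (hfle : ∀ k, f k ≤ (k : ℝ) + 1)
    (n : ℕ) : muTail f n ≤ 1 / ((n : ℝ) + 1) := by
  induction n with
  | zero => simp [muTail]
  | succ n ih =>
    have hfactor : f n / (1 + f n) ≤ ((n : ℝ) + 1) / ((n : ℝ) + 2) := by
      rw [div_le_div_iff₀ (by linarith [hf n]) (by positivity)]
      linarith [hfle n]
    calc muTail f (n + 1) = muTail f n * (f n / (1 + f n)) := muTail_succ f n
      _ ≤ 1 / ((n : ℝ) + 1) * (((n : ℝ) + 1) / ((n : ℝ) + 2)) :=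
          mul_le_mul ih hfactor (div_nonneg (hf n) (by linarith [hf n])) (by positivity)
      _ = 1 / ((n + 1 : ℕ) + 1) := by push_cast; field_simp; ring

theorem tendsto_muTail_atTop {f : ℕ → ℝ} (hf : ∀ k, 0 ≤ f k)
    (hfle : ∀ k, f k ≤ (k : ℝ) + 1) : Tendsto (muTail f) atTop (𝓝 0) :=
  squeeze_zero (muTail_nonneg hf) (muTail_le_one_div hf hfle)
    tendsto_one_div_add_atTop_nhds_zero_nat

theorem Summable.tsum_sub_succ_eq {G : Type*} [AddCommGroup G] [TopologicalSpace G]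
    [IsTopologicalAddGroup G] [T2Space G] {h : ℕ → G} {L : G}
    (hs : Summable fun n => h n - h (n + 1)) (hh : Tendsto h atTop (𝓝 L)) :
    ∑' n, (h n - h (n + 1)) = h 0 - L := by
  refine tendsto_nhds_unique hs.hasSum.tendsto_sum_nat ?_
  simp_rw [sum_range_sub']
  exact tendsto_const_nhds.sub hh

/-- the Stein operator `𝒜g(k) = f k (g(k+1)-g k) + g 0 - g k`
annihilates `μ` in expectation, for every bounded `g`. -/
theorem stein_annihilates_mu (f : ℕ → ℝ) (hfpos : ∀ k, 0 < f k)
    (hfle : ∀ k, f k ≤ (k : ℝ) + 1)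
    (g : ℕ → ℝ) (hg : ∃ M, ∀ k, |g k| ≤ M) :
    ∑' k : ℕ, muk f k * (f k * (g (k + 1) - g k) + g 0 - g k) = 0 := by
  have hf : ∀ k, 0 ≤ f k := fun k => (hfpos k).le
  set h : ℕ → ℝ := fun n => muTail f n * (g 0 - g n)
  have hterm : (fun k => muk f k * (f k * (g (k + 1) - g k) + g 0 - g k)) =
      fun k => h k - h (k + 1) :=
    funext fun k => muk_mul_stein_eq_sub (by linarith [hf k]) g
  have hbdd : IsBoundedUnder (· ≤ ·) atTop (norm ∘ fun n => g 0 - g n) := by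
    obtain ⟨M, hM⟩ := hg
    refine isBoundedUnder_of ⟨M + M, fun n => ?_⟩
    exact (abs_sub _ _).trans (add_le_add (hM 0) (hM n))
  have hh : Tendsto h atTop (𝓝 0) :=
    (tendsto_muTail_atTop hf hfle).zero_mul_isBoundedUnder_le hbdd
  rw [hterm]
  by_cases hs : Summable fun k => h k - h (k + 1)
  · simp [hs.tsum_sub_succ_eq hh, h]
  · exact tsum_eq_zero_of_not_summable hs
end

section
/- Let W be an ℕ₀-valued random variable such that E[f(W)(g(W+1)-g(W)) + g(0) - g(W)] = 0 for all bounded functions g : ℕ₀ → ℝ. Then W has distribution μ, i.e., P(W = k) = (1/(1+f(k))) ∏_{i=0}^{k-1} f(i)/(1+f(i)) for all k. -/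
/-!
Testing the Stein identity against the indicator `g = 1_{ℓ}` turns it into the recursion
`(1 + f 0) p₀ = 1`, `(1 + f (m+1)) p_{m+1} = f m pₘ` for `pₗ = P(W = ℓ)`. Since `1 + f k ≠ 0`,
this recursion has exactly one solution, and `μ` is it.
-/

open Finset MeasureTheory ProbabilityTheory

section Recursion

variable {f : ℕ → ℝ}

theorem muk_zero_mul (hf : 1 + f 0 ≠ 0) : (1 + f 0) * muk f 0 = 1 := by
  simp [muk, hf]

theorem muk_succ_mul (hf : ∀ k, 1 + f k ≠ 0) (m : ℕ) :
    (1 + f (m + 1)) * muk f (m + 1) = f m * muk f m := by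
  simp only [muk, prod_range_succ]
  field_simp [hf m, hf (m + 1)]

theorem eq_muk_of_recursion (hf : ∀ k, 1 + f k ≠ 0) {p : ℕ → ℝ}
    (h_zero : (1 + f 0) * p 0 = 1) (h_succ : ∀ m, (1 + f (m + 1)) * p (m + 1) = f m * p m) :
    ∀ k, p k = muk f k
  | 0 => mul_left_cancel₀ (hf 0) (h_zero.trans (muk_zero_mul (hf 0)).symm)
  | m + 1 => mul_left_cancel₀ (hf (m + 1)) <| by
      rw [h_succ, muk_succ_mul hf, eq_muk_of_recursion hf h_zero h_succ m]

end Recursion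

def steinOperator (f g : ℕ → ℝ) (n : ℕ) : ℝ :=
  f n * (g (n + 1) - g n) + g 0 - g n

theorem steinOperator_indicator_zero (f : ℕ → ℝ) (n : ℕ) :
    steinOperator f (Set.indicator {0} 1) n = 1 - (1 + f 0) * Set.indicator {0} 1 n := by
  cases n <;> simp [steinOperator]

theorem steinOperator_indicator_succ (f : ℕ → ℝ) (m n : ℕ) :
    steinOperator f (Set.indicator {m + 1} 1) n =
      f m * Set.indicator {m} 1 n - (1 + f (m + 1)) * Set.indicator {m + 1} 1 n := by
  simp only [steinOperator, Set.indicator_apply, Set.mem_singleton_iff, Pi.one_apply]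
  grind

theorem abs_indicator_one_le (s : Set ℕ) (n : ℕ) : |Set.indicator s (1 : ℕ → ℝ) n| ≤ 1 := by
  by_cases hn : n ∈ s <;> simp [hn]

section Integrals

variable {Ω : Type*} [MeasurableSpace Ω] {μ : Measure Ω} {W : Ω → ℕ} {f : ℕ → ℝ}

theorem integral_indicator_singleton_comp (hW : Measurable W) (ℓ : ℕ) :
    ∫ ω, Set.indicator {ℓ} (1 : ℕ → ℝ) (W ω) ∂μ = μ.real (W ⁻¹' {ℓ}) := by
  simp_rw [← Set.indicator_comp_right W, Pi.one_comp]
  exact integral_indicator_one (hW (measurableSet_singleton ℓ))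

variable [IsFiniteMeasure μ]

theorem integrable_const_mul_indicator_singleton_comp (hW : Measurable W) (c : ℝ) (ℓ : ℕ) :
    Integrable (fun ω ↦ c * Set.indicator {ℓ} (1 : ℕ → ℝ) (W ω)) μ := by
  simp_rw [← Set.indicator_comp_right W, Pi.one_comp]
  exact ((integrable_const 1).indicator (hW (measurableSet_singleton ℓ))).const_mul c

theorem one_add_mul_measureReal_succ_of_stein (hW : Measurable W) (m : ℕ)
    (h : ∫ ω, steinOperator f (Set.indicator {m + 1} 1) (W ω) ∂μ = 0) :
    (1 + f (m + 1)) * μ.real (W ⁻¹' {m + 1}) = f m * μ.real (W ⁻¹' {m}) := by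
  simp_rw [steinOperator_indicator_succ] at h
  rw [integral_sub (integrable_const_mul_indicator_singleton_comp hW _ m)
      (integrable_const_mul_indicator_singleton_comp hW _ (m + 1)),
    integral_const_mul, integral_const_mul, integral_indicator_singleton_comp hW,
    integral_indicator_singleton_comp hW, sub_eq_zero] at h
  exact h.symm

variable [IsProbabilityMeasure μ]

theorem one_add_mul_measureReal_zero_of_stein (hW : Measurable W)
    (h : ∫ ω, steinOperator f (Set.indicator {0} 1) (W ω) ∂μ = 0) :
    (1 + f 0) * μ.real (W ⁻¹' {0}) = 1 := by
  simp_rw [steinOperator_indicator_zero] at h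
  rw [integral_sub (integrable_const 1) (integrable_const_mul_indicator_singleton_comp hW _ 0),
    integral_const, integral_const_mul, integral_indicator_singleton_comp hW] at h
  simp only [probReal_univ, smul_eq_mul, mul_one] at h
  linarith

end Integrals

theorem stein_characterizes_mu_general {Ω : Type*} [MeasureSpace Ω]
    [IsProbabilityMeasure (ℙ : Measure Ω)]
    (f : ℕ → ℝ) (hfpos : ∀ k, 0 < f k)
    (W : Ω → ℕ) (hW : Measurable W)
    (hstein : ∀ g : ℕ → ℝ, (∃ M, ∀ k, |g k| ≤ M) →
      ∫ ω : Ω, (f (W ω) * (g (W ω + 1) - g (W ω)) + g 0 - g (W ω)) ∂ℙ = 0) :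
    ∀ k, (ℙ {ω | W ω = k}).toReal = muk f k := by
  have hf : ∀ k, 1 + f k ≠ 0 := fun k ↦ (by linarith [hfpos k] : (0 : ℝ) < 1 + f k).ne'
  have hstein_indicator (ℓ : ℕ) :
      ∫ ω, steinOperator f (Set.indicator {ℓ} 1) (W ω) ∂ℙ = 0 :=
    hstein _ ⟨1, abs_indicator_one_le {ℓ}⟩
  exact eq_muk_of_recursion hf
    (one_add_mul_measureReal_zero_of_stein hW (hstein_indicator 0))
    (fun m ↦ one_add_mul_measureReal_succ_of_stein hW m (hstein_indicator (m + 1)))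

/-- if an `ℕ`-valued random variable `W` satisfies
`E[f(W)(g(W+1)-g(W)) + g 0 - g(W)] = 0` for all bounded `g`, then `W ~ μ`. -/
theorem stein_characterizes_mu {Ω : Type*} [MeasureSpace Ω]
    [IsProbabilityMeasure (ℙ : Measure Ω)]
    (f : ℕ → ℝ) (hfpos : ∀ k, 0 < f k) (hfle : ∀ k, f k ≤ (k : ℝ) + 1)
    (W : Ω → ℕ) (hW : Measurable W)
    (hstein : ∀ g : ℕ → ℝ, (∃ M, ∀ k, |g k| ≤ M) →
      ∫ ω : Ω, (f (W ω) * (g (W ω + 1) - g (W ω)) + g 0 - g (W ω)) ∂ℙ = 0) :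
    ∀ k, (ℙ {ω | W ω = k}).toReal = muk f k :=
  stein_characterizes_mu_general f hfpos W hW hstein
end

section
/- Let (X_n)_{n≥1} be the Markov chain on ℕ₀ with X_1 = 0 and transitions: from state i at time n, move to i+1 with probability f(i)/(n+1), return to 0 with probability 1/(n+1) (if i ≥ 1), and stay at i otherwise (with the modification at i = 0 that it moves to 1 with probability f(0)/(n+1) and stays at 0 otherwise). Then for any bounded h : ℕ₀ → ℝ with h(0) = 0 and all n ≥ 1: E[h(X_{n+1})] = (1/(n+1)) ∑_{ℓ=1}^{n} E[f(X_ℓ)(h(X_ℓ+1) - h(X_ℓ))]. -/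
open Finset

/-- `ChainLaw f p` says that `p ℓ k = P(X_ℓ = k)` is the law of the Markov chain
`(X_ℓ)_{ℓ ≥ 1}` with `X_1 = 0` and time-inhomogeneous transitions: from state
`i` at time `n`, move to `i+1` with probability `f i/(n+1)`, return to `0` with
probability `1/(n+1)` if `i ≥ 1` (so that it stays at `i` with probability
`(n - f i)/(n+1)`), and, from `i = 0`, move to `1` with probability `f 0/(n+1)`
and stay at `0` otherwise.  (The chain has total mass one, so the probability
of being at `0` at time `n+1` is
`p n 0 (n+1-f 0)/(n+1) + (∑_{i ≥ 1} p n i)/(n+1) = p n 0 (n+1-f 0)/(n+1) + (1 - p n 0)/(n+1)`.) -/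
def ChainLaw (f : ℕ → ℝ) (p : ℕ → ℕ → ℝ) : Prop :=
  (∀ k, p 1 k = if k = 0 then 1 else 0) ∧
  (∀ n, 1 ≤ n →
    p (n + 1) 0 = p n 0 * (((n : ℝ) + 1 - f 0) / ((n : ℝ) + 1))
      + (1 - p n 0) * (1 / ((n : ℝ) + 1))) ∧
  (∀ n, 1 ≤ n → ∀ j, 1 ≤ j →
    p (n + 1) j = p n (j - 1) * (f (j - 1) / ((n : ℝ) + 1))
      + p n j * (((n : ℝ) - f j) / ((n : ℝ) + 1)))

/-- `Hk f p k ℓ = f k P(X_ℓ = k) - P(X_ℓ ≥ k+1)`; since `X_ℓ ≤ ℓ - 1` a.s.,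
`P(X_ℓ ≥ k+1) = ∑_{j=k+1}^{ℓ-1} p ℓ j`. -/
def Hk (f : ℕ → ℝ) (p : ℕ → ℕ → ℝ) (k ℓ : ℕ) : ℝ :=
  f k * p ℓ k - ∑ j ∈ Finset.Ico (k + 1) ℓ, p ℓ j

/-!
From time `m` to `m + 1` the mass at `j + 1` is fed by `j` (at rate `f j`) and by staying at
`j + 1`; the resets to `0` are invisible to `h` because `h 0 = 0`. This gives the one-step identity
`(m+1) E[h(X_{m+1})] = m E[h(X_m)] + E[f(X_m)(h(X_m+1) - h(X_m))]`, which telescopes from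
`E[h(X_1)] = h 0 = 0`.
-/

lemma Finset.sum_range_succ_eq_sum_range_of_eq_zero {M : Type*} [AddCommMonoid M] {φ : ℕ → M}
    {m : ℕ} (h0 : φ 0 = 0) (hm : φ m = 0) :
    ∑ j ∈ range m, φ (j + 1) = ∑ k ∈ range m, φ k := by
  rw [← add_zero (∑ j ∈ range m, φ (j + 1)), ← h0, ← sum_range_succ', sum_range_succ, hm,
    add_zero]

namespace ChainLaw

variable {f : ℕ → ℝ} {p : ℕ → ℕ → ℝ}

lemma eq_zero_of_le (hp : ChainLaw f p) {ℓ j : ℕ} (hℓ : 1 ≤ ℓ) (hj : ℓ ≤ j) : p ℓ j = 0 := by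
  induction ℓ, hℓ using Nat.le_induction generalizing j with
  | base => rw [hp.1 j, if_neg (by omega)]
  | succ m hm ih =>
    rw [hp.2.2 m hm j (by omega), ih (j := j - 1) (by omega), ih (j := j) (by omega)]
    ring

lemma mul_succ_succ (hp : ChainLaw f p) {m : ℕ} (hm : 1 ≤ m) (j : ℕ) :
    ((m : ℝ) + 1) * p (m + 1) (j + 1) = p m j * f j + p m (j + 1) * ((m : ℝ) - f (j + 1)) := by
  rw [hp.2.2 m hm (j + 1) (by omega), Nat.add_sub_cancel]
  field_simp

lemma sum_mul_succ (hp : ChainLaw f p) {h : ℕ → ℝ} (h0 : h 0 = 0) {m : ℕ} (hm : 1 ≤ m) :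
    ((m : ℝ) + 1) * ∑ k ∈ range (m + 1), p (m + 1) k * h k
      = (m : ℝ) * ∑ k ∈ range m, p m k * h k
        + ∑ k ∈ range m, p m k * (f k * (h (k + 1) - h k)) := by
  have unshifted : ∑ j ∈ range m, p m (j + 1) * ((m : ℝ) - f (j + 1)) * h (j + 1)
      = ∑ k ∈ range m, p m k * ((m : ℝ) - f k) * h k :=
    sum_range_succ_eq_sum_range_of_eq_zero (φ := fun k ↦ p m k * ((m : ℝ) - f k) * h k)
      (by simp [h0]) (by simp [hp.eq_zero_of_le hm le_rfl])
  calc ((m : ℝ) + 1) * ∑ k ∈ range (m + 1), p (m + 1) k * h k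
      = ∑ j ∈ range m, ((m : ℝ) + 1) * p (m + 1) (j + 1) * h (j + 1) := by
        simp only [sum_range_succ', h0, mul_zero, add_zero, mul_sum, mul_assoc]
    _ = ∑ j ∈ range m, p m j * f j * h (j + 1)
          + ∑ j ∈ range m, p m (j + 1) * ((m : ℝ) - f (j + 1)) * h (j + 1) := by
        rw [← sum_add_distrib]
        exact sum_congr rfl fun j _ ↦ by rw [hp.mul_succ_succ hm]; ring
    _ = _ := by
        rw [unshifted, mul_sum, ← sum_add_distrib, ← sum_add_distrib]
        exact sum_congr rfl fun k _ ↦ by ring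

end ChainLaw

theorem expectation_recursion_general (f : ℕ → ℝ) (p : ℕ → ℕ → ℝ) (hp : ChainLaw f p)
    (h : ℕ → ℝ) (h0 : h 0 = 0)
    (n : ℕ) :
    ∑ k ∈ Finset.range (n + 1), p (n + 1) k * h k
      = (1 / ((n : ℝ) + 1)) * ∑ ℓ ∈ Finset.Icc 1 n,
          ∑ k ∈ Finset.range ℓ, p ℓ k * (f k * (h (k + 1) - h k)) := by
  suffices telescoped : ((n : ℝ) + 1) * ∑ k ∈ range (n + 1), p (n + 1) k * h k
      = ∑ ℓ ∈ Icc 1 n, ∑ k ∈ range ℓ, p ℓ k * (f k * (h (k + 1) - h k)) by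
    rw [← telescoped, one_div, inv_mul_cancel_left₀ (by positivity)]
  induction n with
  | zero => simp [h0]
  | succ n ih =>
    rw [sum_Icc_succ_top (by omega), ← ih, hp.sum_mul_succ h0 n.succ_pos, Nat.cast_succ]

/-- for any bounded `h` with `h 0 = 0` and any `n ≥ 1`,
`E[h(X_{n+1})] = (1/(n+1)) ∑_{ℓ=1}^n E[f(X_ℓ)(h(X_ℓ+1) - h(X_ℓ))]`
(expectations written using that `X_ℓ ∈ {0, …, ℓ-1}` a.s.). -/
theorem expectation_recursion (f : ℕ → ℝ) (hfpos : ∀ k, 0 < f k)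
    (hfle : ∀ k, f k ≤ (k : ℝ) + 1) (p : ℕ → ℕ → ℝ) (hp : ChainLaw f p)
    (h : ℕ → ℝ) (hbdd : ∃ M, ∀ k, |h k| ≤ M) (h0 : h 0 = 0)
    (n : ℕ) (hn : 1 ≤ n) :
    ∑ k ∈ Finset.range (n + 1), p (n + 1) k * h k
      = (1 / ((n : ℝ) + 1)) * ∑ ℓ ∈ Finset.Icc 1 n,
          ∑ k ∈ Finset.range ℓ, p ℓ k * (f k * (h (k + 1) - h k)) :=
  expectation_recursion_general f p hp h h0 n
end

section
/- Let (X_ℓ) be the Markov chain from the general preferential attachment degree evolution (X_1 = 0; from state i at time ℓ it moves to i+1 w.p. f(i)/(ℓ+1), to 0 w.p. 1/(ℓ+1) if i ≥ 1, else stays), and define h(k,ℓ) = f(k)P(X_ℓ = k) - P(X_ℓ ≥ k+1). Then h(k,ℓ) = 0 for all k ≥ ℓ, and for all ℓ ≥ 1, k ≥ 0: h(k, ℓ+1) = ((ℓ - f(k))/(ℓ+1)) h(k,ℓ) + (f(k)/(ℓ+1)) h(k-1,ℓ), with the convention h(-1,ℓ) = 0. -/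
open Finset

/-!
Push both terms of `h(k, ℓ) = f k · P(X_ℓ = k) - P(X_ℓ ≥ k+1)` one step through the chain.
Between times `n` and `n+1` the tail `P(X ≥ k+1)` gains exactly the mass that jumps from `k`
and loses the fraction `1/(n+1)` of itself that resets to `0`; the point mass at `k` gains the
jump from `k-1` and keeps the fraction `(n - f k)/(n+1)`. Comparing the two gives the recursion,
and for `k = 0` the tail is `1 - P(X = 0)` because the chain conserves mass.
-/

theorem sum_Ico_eq_add_sum_Ico_succ_of_eq_zero {M : Type*} [AddCommMonoid M] (g : ℕ → M)
    {k n : ℕ} (hg : n ≤ k → g k = 0) :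
    ∑ j ∈ Ico k n, g j = g k + ∑ j ∈ Ico (k + 1) n, g j := by
  rcases lt_or_ge k n with hkn | hnk
  · exact sum_eq_sum_Ico_succ_bot hkn g
  · simp [Ico_eq_empty_of_le hnk, Ico_eq_empty_of_le (hnk.trans k.le_succ), hg hnk]

namespace ChainLaw

variable {f : ℕ → ℝ} {p : ℕ → ℕ → ℝ}

theorem mul_apply_succ (hp : ChainLaw f p) {n j : ℕ} (hn : 1 ≤ n) (hj : 1 ≤ j) :
    ((n : ℝ) + 1) * p (n + 1) j = f (j - 1) * p n (j - 1) + ((n : ℝ) - f j) * p n j := by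
  rw [hp.2.2 n hn j hj]
  field_simp

theorem eq_zero_of_le_s9 (hp : ChainLaw f p) {n k : ℕ} (hn : 1 ≤ n) (hk : n ≤ k) : p n k = 0 := by
  induction n, hn using Nat.le_induction generalizing k with
  | base => simp [hp.1 k, show k ≠ 0 by omega]
  | succ n hn ih =>
    rw [hp.2.2 n hn k (by omega), ih (by omega), ih (by omega)]
    ring

theorem mul_sum_Ico_succ (hp : ChainLaw f p) {n : ℕ} (hn : 1 ≤ n) (k : ℕ) :
    ((n : ℝ) + 1) * ∑ j ∈ Ico (k + 1) (n + 1), p (n + 1) j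
      = f k * p n k + n * ∑ j ∈ Ico (k + 1) n, p n j := by
  have hjump : ∑ j ∈ Ico (k + 1) (n + 1), f (j - 1) * p n (j - 1)
      = f k * p n k + ∑ j ∈ Ico (k + 1) n, f j * p n j := by
    rw [← sum_Ico_add' (fun j => f (j - 1) * p n (j - 1)) k n 1]
    simp only [Nat.add_sub_cancel]
    exact sum_Ico_eq_add_sum_Ico_succ_of_eq_zero _ fun h => by simp [hp.eq_zero_of_le_s9 hn h]
  have hstay : ∑ j ∈ Ico (k + 1) (n + 1), ((n : ℝ) - f j) * p n j
      = ∑ j ∈ Ico (k + 1) n, ((n : ℝ) - f j) * p n j := by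
    refine (sum_subset (Ico_subset_Ico_right n.le_succ) fun j hj hj' => ?_).symm
    simp only [mem_Ico] at hj hj'
    simp [hp.eq_zero_of_le_s9 hn (by omega : n ≤ j)]
  rw [mul_sum, sum_congr rfl fun j hj => hp.mul_apply_succ hn (by simp at hj; omega),
    sum_add_distrib, hjump, hstay, add_assoc, ← sum_add_distrib, mul_sum]
  exact congrArg _ (sum_congr rfl fun j _ => by ring)

theorem sum_Ico_one (hp : ChainLaw f p) {n : ℕ} (hn : 1 ≤ n) :
    ∑ j ∈ Ico 1 n, p n j = 1 - p n 0 := by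
  induction n, hn using Nat.le_induction with
  | base => simp [hp.1 0]
  | succ n hn ih =>
    have h := hp.mul_sum_Ico_succ hn 0
    rw [ih] at h
    rw [hp.2.1 n hn]
    have hne : (n : ℝ) + 1 ≠ 0 := by positivity
    field_simp at h ⊢
    linear_combination h

end ChainLaw

theorem Hk_recursion_general (f : ℕ → ℝ) (p : ℕ → ℕ → ℝ) (hp : ChainLaw f p) :
    (∀ k ℓ, 1 ≤ ℓ → ℓ ≤ k → Hk f p k ℓ = 0) ∧
    (∀ ℓ, 1 ≤ ℓ → ∀ k,
      Hk f p k (ℓ + 1)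
        = (((ℓ : ℝ) - f k) / ((ℓ : ℝ) + 1)) * Hk f p k ℓ
          + (f k / ((ℓ : ℝ) + 1)) * (if k = 0 then 0 else Hk f p (k - 1) ℓ)) := by
  refine ⟨fun k ℓ hℓ hk => ?_, fun n hn k => ?_⟩
  · simp [Hk, hp.eq_zero_of_le_s9 hℓ hk, Ico_eq_empty_of_le (hk.trans k.le_succ)]
  have hne : (n : ℝ) + 1 ≠ 0 := by positivity
  rcases k with _ | k
  · rw [if_pos rfl, Hk, Hk, zero_add, hp.sum_Ico_one (by omega), hp.sum_Ico_one hn,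
      hp.2.1 n hn]
    field_simp
    ring
  · have htail := hp.mul_sum_Ico_succ hn (k + 1)
    have hstep := hp.mul_apply_succ hn (j := k + 1) (by omega)
    have hsplit := sum_Ico_eq_add_sum_Ico_succ_of_eq_zero (p n) (k := k + 1)
      (hp.eq_zero_of_le_s9 hn)
    rw [Nat.add_sub_cancel] at hstep
    rw [if_neg k.succ_ne_zero, Nat.add_sub_cancel]
    simp only [Hk]
    field_simp
    linear_combination (f (k + 1)) * hstep - htail + (f (k + 1)) * hsplit

/-- `h(k,ℓ) = 0` for `k ≥ ℓ`, and the recursion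
`h(k,ℓ+1) = ((ℓ - f k)/(ℓ+1)) h(k,ℓ) + (f k/(ℓ+1)) h(k-1,ℓ)` holds for all
`ℓ ≥ 1`, `k ≥ 0`, with the convention `h(-1,ℓ) = 0`. -/
theorem Hk_recursion (f : ℕ → ℝ) (hfpos : ∀ k, 0 < f k)
    (hfle : ∀ k, f k ≤ (k : ℝ) + 1) (p : ℕ → ℕ → ℝ) (hp : ChainLaw f p) :
    (∀ k ℓ, 1 ≤ ℓ → ℓ ≤ k → Hk f p k ℓ = 0) ∧
    (∀ ℓ, 1 ≤ ℓ → ∀ k,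
      Hk f p k (ℓ + 1)
        = (((ℓ : ℝ) - f k) / ((ℓ : ℝ) + 1)) * Hk f p k ℓ
          + (f k / ((ℓ : ℝ) + 1)) * (if k = 0 then 0 else Hk f p (k - 1) ℓ)) :=
  Hk_recursion_general f p hp
end
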